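/- arXiv:1907.01619 — 6 statements merged into one kernel-verified Lean document; each statement's English description precedes it below -/
import Mathlib

section
/- Suppose the Subset-Sum instance W = (w_0, w) with w ∈ ℕ^n is satisfiable, and let p_W(x) = (∑ᵢ wᵢxᵢ − w₀)² + λ·∑ᵢ xᵢ(1−xᵢ) for some λ > 0. Then the minimum of p_W over [0,1]^n equals 0, and this minimum is achieved exactly at the points x ∈ {0,1}^n satisfying ⟨w, x⟩ = w₀. -/
/-! On `[0,1]^n` both summands of `p_W` are nonnegative, so `p_W x = 0` forces each of them to
vanish; and `xᵢ(1 − xᵢ) ≥ 0` vanishes exactly when `xᵢ ∈ {0, 1}`. -/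

open Finset

section BooleanPenalty

variable {ι : Type*} [Fintype ι]

lemma mul_one_sub_nonneg_of_mem_Icc {t : ℝ} (ht : t ∈ Set.Icc (0 : ℝ) 1) : 0 ≤ t * (1 - t) :=
  mul_nonneg ht.1 (sub_nonneg.2 ht.2)

lemma mul_one_sub_eq_zero_iff {t : ℝ} : t * (1 - t) = 0 ↔ t = 0 ∨ t = 1 := by
  rw [mul_eq_zero, sub_eq_zero, eq_comm (a := (1 : ℝ))]

lemma sum_mul_one_sub_nonneg {x : ι → ℝ} (hx : ∀ i, x i ∈ Set.Icc (0 : ℝ) 1) :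
    0 ≤ ∑ i, x i * (1 - x i) :=
  sum_nonneg fun i _ => mul_one_sub_nonneg_of_mem_Icc (hx i)

lemma sum_mul_one_sub_eq_zero_iff {x : ι → ℝ} (hx : ∀ i, x i ∈ Set.Icc (0 : ℝ) 1) :
    ∑ i, x i * (1 - x i) = 0 ↔ ∀ i, x i = 0 ∨ x i = 1 := by
  simp only [sum_eq_zero_iff_of_nonneg fun i _ => mul_one_sub_nonneg_of_mem_Icc (hx i),
    mem_univ, true_imp_iff, mul_one_sub_eq_zero_iff]

end BooleanPenalty

lemma sq_add_mul_eq_zero_iff {a b lam : ℝ} (hlam : 0 < lam) (hb : 0 ≤ b) :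
    a ^ 2 + lam * b = 0 ↔ a = 0 ∧ b = 0 := by
  rw [add_eq_zero_iff_of_nonneg (sq_nonneg a) (mul_nonneg hlam.le hb),
    pow_eq_zero_iff two_ne_zero, mul_eq_zero, or_iff_right hlam.ne']

theorem subsetSum_deg2_minimum_general
    (n : ℕ) (w0 : ℕ) (w : Fin n → ℕ) (lam : ℝ) (hlam : 0 < lam)
    (pW : (Fin n → ℝ) → ℝ)
    (hpW : ∀ x, pW x = (∑ i, (w i : ℝ) * x i - (w0 : ℝ)) ^ 2
        + lam * ∑ i, x i * (1 - x i))
    (hsat : ∃ x : Fin n → ℝ, (∀ i, x i = 0 ∨ x i = 1) ∧ ∑ i, (w i : ℝ) * x i = (w0 : ℝ)) :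
    IsLeast {y : ℝ | ∃ x : Fin n → ℝ, (∀ i, x i ∈ Set.Icc (0:ℝ) 1) ∧ pW x = y} 0 ∧
    ∀ x : Fin n → ℝ, (∀ i, x i ∈ Set.Icc (0:ℝ) 1) →
      (pW x = 0 ↔ ((∀ i, x i = 0 ∨ x i = 1) ∧ ∑ i, (w i : ℝ) * x i = (w0 : ℝ))) := by
  have hzero_iff : ∀ x : Fin n → ℝ, (∀ i, x i ∈ Set.Icc (0:ℝ) 1) →
      (pW x = 0 ↔ ((∀ i, x i = 0 ∨ x i = 1) ∧ ∑ i, (w i : ℝ) * x i = (w0 : ℝ))) := by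
    intro x hx
    rw [hpW, sq_add_mul_eq_zero_iff hlam (sum_mul_one_sub_nonneg hx), sub_eq_zero,
      sum_mul_one_sub_eq_zero_iff hx, and_comm]
  refine ⟨⟨?_, ?_⟩, hzero_iff⟩
  · obtain ⟨x, hbool, hsum⟩ := hsat
    have hx : ∀ i, x i ∈ Set.Icc (0:ℝ) 1 := fun i => by rcases hbool i with h | h <;> simp [h]
    exact ⟨x, hx, (hzero_iff x hx).2 ⟨hbool, hsum⟩⟩
  · rintro y ⟨x, hx, rfl⟩
    rw [hpW]
    exact add_nonneg (sq_nonneg _) (mul_nonneg hlam.le (sum_mul_one_sub_nonneg hx))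

/-- If the Subset-Sum instance `(w₀, w)` is satisfiable, then the minimum of
`p_W(x) = (∑ᵢ wᵢxᵢ − w₀)² + λ·∑ᵢ xᵢ(1−xᵢ)` over `[0,1]^n` is `0`, achieved exactly at the
Boolean points `x ∈ {0,1}^n` with `⟨w,x⟩ = w₀`. -/
theorem subsetSum_deg2_minimum
    (n : ℕ) (hn : 1 ≤ n) (w0 : ℕ) (w : Fin n → ℕ) (lam : ℝ) (hlam : 0 < lam)
    (pW : (Fin n → ℝ) → ℝ)
    (hpW : ∀ x, pW x = (∑ i, (w i : ℝ) * x i - (w0 : ℝ)) ^ 2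
        + lam * ∑ i, x i * (1 - x i))
    (hsat : ∃ x : Fin n → ℝ, (∀ i, x i = 0 ∨ x i = 1) ∧ ∑ i, (w i : ℝ) * x i = (w0 : ℝ)) :
    IsLeast {y : ℝ | ∃ x : Fin n → ℝ, (∀ i, x i ∈ Set.Icc (0:ℝ) 1) ∧ pW x = y} 0 ∧
    ∀ x : Fin n → ℝ, (∀ i, x i ∈ Set.Icc (0:ℝ) 1) →
      (pW x = 0 ↔ ((∀ i, x i = 0 ∨ x i = 1) ∧ ∑ i, (w i : ℝ) * x i = (w0 : ℝ))) :=
  subsetSum_deg2_minimum_general n w0 w lam hlam pW hpW hsat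
end

section
/- Let p_W(x) = (∑ᵢ wᵢxᵢ − w₀)² + λ·B(x) with B(x) = ∑ᵢ xᵢ(1−xᵢ) and λ > 2. Let α be the smaller root of X(1−X) = 1/(2λ), i.e., α = (1 − √(1 − 2/λ))/2. If x ∈ [0,1]^n has ℓ₁ distance strictly greater than α from every point of {0,1}^n, then p_W(x) > 1/2. -/
/-!
Round each coordinate of `x` to the nearest bit and let `dᵢ ≤ 1/2` be the rounding error, so
that `xᵢ(1 - xᵢ) = dᵢ(1 - dᵢ)` and, by hypothesis, `∑ dᵢ > α`. If every `dᵢ ≤ α`, then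
`dᵢ(1 - dᵢ) ≥ (1 - α) dᵢ` and summing gives `B(x) > α(1 - α)`; otherwise some `dⱼ ∈ (α, 1/2]`,
and `t(1 - t)` is increasing on `[0, 1/2]`. Either way `λ B(x) > λ α(1 - α) = 1/2`.
-/

open Finset

section OrderedField

variable {K : Type*} [Field K] [LinearOrder K] [IsStrictOrderedRing K]

lemma round_eq_zero_or_one_of_mem_Icc [FloorRing K] {x : K} (hx : x ∈ Set.Icc (0 : K) 1) :
    (round x : K) = 0 ∨ (round x : K) = 1 := by
  obtain ⟨hx0, hx1⟩ := hx
  rw [round_eq]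
  rcases lt_or_ge x (1 / 2) with hlt | hge
  · left
    rw [Int.floor_eq_zero_iff.mpr ⟨by positivity, by linarith⟩, Int.cast_zero]
  · right
    have hfloor : ⌊x + 1 / 2⌋ = 1 := Int.floor_eq_iff.mpr ⟨by push_cast; linarith, by
      push_cast; linarith⟩
    rw [hfloor, Int.cast_one]

lemma mul_one_sub_eq_abs_sub_mul_one_sub_abs_sub {x r : K} (hx : x ∈ Set.Icc (0 : K) 1)
    (hr : r = 0 ∨ r = 1) :
    x * (1 - x) = |x - r| * (1 - |x - r|) := by
  obtain ⟨hx0, hx1⟩ := hx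
  rcases hr with rfl | rfl
  · rw [sub_zero, abs_of_nonneg hx0]
  · rw [abs_of_nonpos (sub_nonpos.mpr hx1)]
    ring

lemma mul_one_sub_lt_sum_mul_one_sub {ι : Type*} (s : Finset ι) {d : ι → K} {a : K}
    (ha : a < 1) (hd : ∀ i ∈ s, d i ∈ Set.Icc (0 : K) (1 / 2)) (hsum : a < ∑ i ∈ s, d i) :
    a * (1 - a) < ∑ i ∈ s, d i * (1 - d i) := by
  by_cases hsmall : ∀ i ∈ s, d i ≤ a
  · have hterm : ∀ i ∈ s, (1 - a) * d i ≤ d i * (1 - d i) := fun i hi => by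
      nlinarith [(hd i hi).1, hsmall i hi]
    calc a * (1 - a) < (1 - a) * ∑ i ∈ s, d i := by nlinarith
      _ = ∑ i ∈ s, (1 - a) * d i := mul_sum _ _ _
      _ ≤ ∑ i ∈ s, d i * (1 - d i) := sum_le_sum hterm
  · push Not at hsmall
    obtain ⟨j, hj, haj⟩ := hsmall
    have hnonneg : ∀ i ∈ s, 0 ≤ d i * (1 - d i) := fun i hi => by
      nlinarith [(hd i hi).1, (hd i hi).2]
    calc a * (1 - a) < d j * (1 - d j) := by nlinarith [(hd j hj).2]
      _ ≤ ∑ i ∈ s, d i * (1 - d i) := single_le_sum hnonneg hj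

end OrderedField

lemma mul_smaller_root_mul_one_sub {lam : ℝ} (hlam : 2 ≤ lam) :
    lam * ((1 - √(1 - 2 / lam)) / 2 * (1 - (1 - √(1 - 2 / lam)) / 2)) = 1 / 2 := by
  have hlam0 : lam ≠ 0 := by positivity
  have hsq : √(1 - 2 / lam) ^ 2 = 1 - 2 / lam := Real.sq_sqrt <| by
    rw [sub_nonneg, div_le_one (by positivity)]
    exact hlam
  calc lam * ((1 - √(1 - 2 / lam)) / 2 * (1 - (1 - √(1 - 2 / lam)) / 2))
      = lam * (1 - √(1 - 2 / lam) ^ 2) / 4 := by ring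
    _ = 1 / 2 := by rw [hsq]; field_simp; ring

theorem subsetSum_deg2_far_from_boolean_general
    (n : ℕ) (w0 : ℕ) (w : Fin n → ℕ) (lam : ℝ) (hlam : 2 < lam)
    (α : ℝ) (hα : α = (1 - Real.sqrt (1 - 2 / lam)) / 2)
    (pW : (Fin n → ℝ) → ℝ)
    (hpW : ∀ x, pW x = (∑ i, (w i : ℝ) * x i - (w0 : ℝ)) ^ 2
        + lam * ∑ i, x i * (1 - x i))
    (x : Fin n → ℝ) (hx : ∀ i, x i ∈ Set.Icc (0:ℝ) 1)
    (hfar : ∀ z : Fin n → ℝ, (∀ i, z i = 0 ∨ z i = 1) → α < ∑ i, |x i - z i|) :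
    1 / 2 < pW x := by
  set z : Fin n → ℝ := fun i => round (x i)
  set d : Fin n → ℝ := fun i => |x i - z i|
  have hz : ∀ i, z i = 0 ∨ z i = 1 := fun i => round_eq_zero_or_one_of_mem_Icc (hx i)
  have hd : ∀ i ∈ univ, d i ∈ Set.Icc (0 : ℝ) (1 / 2) := fun i _ =>
    ⟨abs_nonneg _, abs_sub_round _⟩
  have hB : ∑ i, x i * (1 - x i) = ∑ i, d i * (1 - d i) :=
    sum_congr rfl fun i _ => mul_one_sub_eq_abs_sub_mul_one_sub_abs_sub (hx i) (hz i)
  have hα1 : α < 1 := by rw [hα]; linarith [Real.sqrt_nonneg (1 - 2 / lam)]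
  have hαlam : lam * (α * (1 - α)) = 1 / 2 := hα ▸ mul_smaller_root_mul_one_sub hlam.le
  have hlt := mul_one_sub_lt_sum_mul_one_sub univ hα1 hd (hfar z hz)
  rw [hpW, hB]
  nlinarith [sq_nonneg (∑ i, (w i : ℝ) * x i - (w0 : ℝ)),
    mul_lt_mul_of_pos_left hlt (by linarith : (0 : ℝ) < lam)]

/-- with `λ > 2` and `α = (1 − √(1 − 2/λ))/2`, any `x ∈ [0,1]^n` at ℓ₁ distance
strictly greater than `α` from every Boolean point satisfies `p_W(x) > 1/2`. -/
theorem subsetSum_deg2_far_from_boolean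
    (n : ℕ) (hn : 1 ≤ n) (w0 : ℕ) (w : Fin n → ℕ) (lam : ℝ) (hlam : 2 < lam)
    (α : ℝ) (hα : α = (1 - Real.sqrt (1 - 2 / lam)) / 2)
    (pW : (Fin n → ℝ) → ℝ)
    (hpW : ∀ x, pW x = (∑ i, (w i : ℝ) * x i - (w0 : ℝ)) ^ 2
        + lam * ∑ i, x i * (1 - x i))
    (x : Fin n → ℝ) (hx : ∀ i, x i ∈ Set.Icc (0:ℝ) 1)
    (hfar : ∀ z : Fin n → ℝ, (∀ i, z i = 0 ∨ z i = 1) → α < ∑ i, |x i - z i|) :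
    1 / 2 < pW x :=
  subsetSum_deg2_far_from_boolean_general n w0 w lam hlam α hα pW hpW x hx hfar
end

section
/- Let p_W(x) = (∑ᵢ wᵢxᵢ − w₀)² + λB(x) with B(x) = ∑ᵢ xᵢ(1−xᵢ) and λ = M‖w‖₂ for some M > 0. Let β = (√(M²+2) − M)/(2‖w‖₂), i.e., β‖w‖₂ is the positive root of X² + MX = 1/2. If x ∈ [0,1]^n is within ℓ₁ distance β of some z ∈ {0,1}^n with ∑ᵢ wᵢzᵢ = w₀, then p_W(x) ≤ 1/2. -/
open Finset

/-!
Write `S = ‖w‖₂` and `d = ‖x - z‖₁`. Since `⟨w, z⟩ = w₀` and every `|wᵢ| ≤ S`, the linear part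
satisfies `|⟨w, x⟩ - w₀| ≤ S d`, and the penalty satisfies `B(x) ≤ d` because `z` is Boolean.
Hence `p_W(x) ≤ (S d)² + M (S d)`, which is increasing in `S d ≥ 0`; at `S d = S β`, the positive
root of `X² + M X = 1/2`, it equals `1/2`.
-/

section Estimates

variable {ι : Type*} [Fintype ι]

lemma abs_le_sqrt_sum_sq (w : ι → ℝ) (i : ι) : |w i| ≤ √(∑ j, w j ^ 2) :=
  Real.abs_le_sqrt <| single_le_sum (f := fun j => w j ^ 2) (fun _ _ => sq_nonneg _) (mem_univ i)

lemma abs_sum_mul_sub_sum_mul_le (w x z : ι → ℝ) :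
    |∑ i, w i * x i - ∑ i, w i * z i| ≤ √(∑ i, w i ^ 2) * ∑ i, |x i - z i| := by
  rw [← sum_sub_distrib, mul_sum]
  calc |∑ i, (w i * x i - w i * z i)| ≤ ∑ i, |w i * (x i - z i)| := by
        simpa only [mul_sub] using abs_sum_le_sum_abs _ _
    _ ≤ ∑ i, √(∑ j, w j ^ 2) * |x i - z i| := sum_le_sum fun i _ => by
        rw [abs_mul]
        exact mul_le_mul_of_nonneg_right (abs_le_sqrt_sum_sq w i) (abs_nonneg _)

lemma mul_one_sub_le_abs_sub {x z : ℝ} (hx : x ∈ Set.Icc (0 : ℝ) 1) (hz : z = 0 ∨ z = 1) :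
    x * (1 - x) ≤ |x - z| := by
  obtain ⟨hx0, hx1⟩ := hx
  rcases hz with rfl | rfl
  · rw [sub_zero, abs_of_nonneg hx0]
    nlinarith
  · rw [abs_sub_comm, abs_of_nonneg (sub_nonneg.mpr hx1)]
    nlinarith

lemma sum_mul_one_sub_le_sum_abs_sub {x z : ι → ℝ} (hx : ∀ i, x i ∈ Set.Icc (0 : ℝ) 1)
    (hz : ∀ i, z i = 0 ∨ z i = 1) : ∑ i, x i * (1 - x i) ≤ ∑ i, |x i - z i| :=
  sum_le_sum fun i _ => mul_one_sub_le_abs_sub (hx i) (hz i)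

end Estimates

lemma sq_add_mul_le_half {M s : ℝ} (hM : 0 ≤ M) (hs : 0 ≤ s)
    (hsM : s ≤ (√(M ^ 2 + 2) - M) / 2) : s ^ 2 + M * s ≤ 1 / 2 := by
  set t := (√(M ^ 2 + 2) - M) / 2
  have root : t ^ 2 + M * t = 1 / 2 := by
    simp only [t]
    linear_combination Real.sq_sqrt (by positivity : (0 : ℝ) ≤ M ^ 2 + 2) / 4
  nlinarith [mul_le_mul_of_nonneg_left hsM hM, mul_le_mul hsM hsM hs (hs.trans hsM)]

theorem subsetSum_deg2_close_to_solution_general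
    (n : ℕ) (w0 : ℕ) (w : Fin n → ℕ)
    (M lam β : ℝ) (hM : 0 < M)
    (hwpos : 0 < Real.sqrt (∑ i, ((w i : ℝ)) ^ 2))
    (hlam : lam = M * Real.sqrt (∑ i, ((w i : ℝ)) ^ 2))
    (hβ : β = (Real.sqrt (M ^ 2 + 2) - M) / (2 * Real.sqrt (∑ i, ((w i : ℝ)) ^ 2)))
    (pW : (Fin n → ℝ) → ℝ)
    (hpW : ∀ x, pW x = (∑ i, (w i : ℝ) * x i - (w0 : ℝ)) ^ 2
        + lam * ∑ i, x i * (1 - x i))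
    (x : Fin n → ℝ) (hx : ∀ i, x i ∈ Set.Icc (0:ℝ) 1)
    (z : Fin n → ℝ) (hz : ∀ i, z i = 0 ∨ z i = 1)
    (hzsol : ∑ i, (w i : ℝ) * z i = (w0 : ℝ))
    (hclose : ∑ i, |x i - z i| ≤ β) :
    pW x ≤ 1 / 2 := by
  set S := √(∑ i, ((w i : ℝ)) ^ 2)
  set d := ∑ i, |x i - z i|
  have linear : |∑ i, (w i : ℝ) * x i - w0| ≤ S * d :=
    hzsol ▸ abs_sum_mul_sub_sum_mul_le _ x z
  have penalty : lam * ∑ i, x i * (1 - x i) ≤ M * (S * d) := by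
    rw [hlam, mul_assoc]
    gcongr
    exact sum_mul_one_sub_le_sum_abs_sub hx hz
  have close : S * d ≤ (√(M ^ 2 + 2) - M) / 2 := by
    rw [hβ, le_div_iff₀ (mul_pos two_pos hwpos)] at hclose
    linarith
  have hSd : 0 ≤ S * d := mul_nonneg hwpos.le (sum_nonneg fun i _ => abs_nonneg _)
  rw [hpW, ← sq_abs]
  calc |∑ i, (w i : ℝ) * x i - w0| ^ 2 + lam * ∑ i, x i * (1 - x i)
      ≤ (S * d) ^ 2 + M * (S * d) := add_le_add (pow_le_pow_left₀ (abs_nonneg _) linear 2) penalty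
    _ ≤ 1 / 2 := sq_add_mul_le_half hM.le hSd close

/-- with `λ = M‖w‖₂` and `β = (√(M²+2) − M)/(2‖w‖₂)`, if `x ∈ [0,1]^n` is within
ℓ₁ distance `β` of a Boolean solution `z` of the Subset-Sum instance, then `p_W(x) ≤ 1/2`. -/
theorem subsetSum_deg2_close_to_solution
    (n : ℕ) (hn : 1 ≤ n) (w0 : ℕ) (w : Fin n → ℕ)
    (M lam β : ℝ) (hM : 0 < M)
    (hwpos : 0 < Real.sqrt (∑ i, ((w i : ℝ)) ^ 2))
    (hlam : lam = M * Real.sqrt (∑ i, ((w i : ℝ)) ^ 2))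
    (hβ : β = (Real.sqrt (M ^ 2 + 2) - M) / (2 * Real.sqrt (∑ i, ((w i : ℝ)) ^ 2)))
    (pW : (Fin n → ℝ) → ℝ)
    (hpW : ∀ x, pW x = (∑ i, (w i : ℝ) * x i - (w0 : ℝ)) ^ 2
        + lam * ∑ i, x i * (1 - x i))
    (x : Fin n → ℝ) (hx : ∀ i, x i ∈ Set.Icc (0:ℝ) 1)
    (z : Fin n → ℝ) (hz : ∀ i, z i = 0 ∨ z i = 1)
    (hzsol : ∑ i, (w i : ℝ) * z i = (w0 : ℝ))
    (hclose : ∑ i, |x i - z i| ≤ β) :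
    pW x ≤ 1 / 2 :=
  subsetSum_deg2_close_to_solution_general n w0 w M lam β hM hwpos hlam hβ pW hpW x hx z hz hzsol
    hclose
end

section
/- Let p_W(x) = (∑ᵢ wᵢxᵢ − w₀)² + λ∑ᵢ(xᵢ²−1)² with integer w₀ and wᵢ, w ≠ 0, λ ≥ 0. If x ∈ ℝ^n is within ℓ₂ distance 1/(4‖w‖₂) of some z ∈ {−1,1}^n with ∑ᵢ wᵢzᵢ ≠ w₀, then p_W(x) ≥ 9/16 > 1/2. -/
open Finset

/-!
Rounding `z` to integers shows that `∑ wᵢzᵢ - w₀` is a nonzero integer, hence of absolute value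
at least `1`. By Cauchy–Schwarz, moving from `z` to `x` changes the linear form by at most
`‖w‖₂ ‖x - z‖₂ ≤ 1/4`, so `|∑ wᵢxᵢ - w₀| ≥ 3/4`; the penalty term is nonnegative.
-/

namespace Real

variable {ι : Type*}

theorem abs_sum_mul_le_sqrt_mul_sqrt (s : Finset ι) (f g : ι → ℝ) :
    |∑ i ∈ s, f i * g i| ≤ √(∑ i ∈ s, f i ^ 2) * √(∑ i ∈ s, g i ^ 2) := by
  refine abs_le.mpr ⟨?_, sum_mul_le_sqrt_mul_sqrt s f g⟩
  have h := sum_mul_le_sqrt_mul_sqrt s (fun i => -f i) g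
  simp only [neg_mul, sum_neg_distrib, neg_sq] at h
  linarith

/-- The case `∑ fᵢ² = 0` is allowed: then `1 / (4 * 0) = 0` and the sum vanishes. -/
theorem abs_sum_mul_le_quarter_of_sqrt_le {s : Finset ι} {f g : ι → ℝ}
    (hg : √(∑ i ∈ s, g i ^ 2) ≤ 1 / (4 * √(∑ i ∈ s, f i ^ 2))) :
    |∑ i ∈ s, f i * g i| ≤ 1 / 4 := by
  set a := √(∑ i ∈ s, f i ^ 2)
  calc |∑ i ∈ s, f i * g i| ≤ a * √(∑ i ∈ s, g i ^ 2) := abs_sum_mul_le_sqrt_mul_sqrt s f g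
    _ ≤ a * (1 / (4 * a)) := mul_le_mul_of_nonneg_left hg (sqrt_nonneg _)
    _ = a / a / 4 := by ring
    _ ≤ 1 / 4 := by linarith [div_self_le_one a]

end Real

theorem exists_intCast_sum_mul {ι : Type*} (s : Finset ι) (w : ι → ℤ) {z : ι → ℝ}
    (hz : ∀ i, ∃ k : ℤ, z i = k) : ∃ m : ℤ, ∑ i ∈ s, (w i : ℝ) * z i = m := by
  choose k hk using hz
  exact ⟨∑ i ∈ s, w i * k i, by push_cast [hk]; rfl⟩

theorem one_le_abs_intCast_sub {m n : ℤ} (h : m ≠ n) : (1 : ℝ) ≤ |(m : ℝ) - n| := by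
  exact_mod_cast Int.one_le_abs (sub_ne_zero.mpr h)

theorem subsetSum_deg4_close_to_nonsolution_general
    (n : ℕ) (w0 : ℤ) (w : Fin n → ℤ)
    (lam : ℝ) (hlam : 0 ≤ lam)
    (pW : (Fin n → ℝ) → ℝ)
    (hpW : ∀ x, pW x = (∑ i, (w i : ℝ) * x i - (w0 : ℝ)) ^ 2
        + lam * ∑ i, (x i ^ 2 - 1) ^ 2)
    (x : Fin n → ℝ) (z : Fin n → ℝ) (hz : ∀ i, z i = -1 ∨ z i = 1)
    (hznot : ∑ i, (w i : ℝ) * z i ≠ (w0 : ℝ))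
    (hclose : Real.sqrt (∑ i, (x i - z i) ^ 2) ≤ 1 / (4 * Real.sqrt (∑ i, ((w i : ℝ)) ^ 2))) :
    9 / 16 ≤ pW x ∧ (1:ℝ) / 2 < 9 / 16 := by
  refine ⟨?_, by norm_num⟩
  have hz_int : ∀ i, ∃ k : ℤ, z i = k := fun i => by
    rcases hz i with h | h
    exacts [⟨-1, by simp [h]⟩, ⟨1, by simp [h]⟩]
  obtain ⟨m, hm⟩ := exists_intCast_sum_mul univ w hz_int
  have hgap : 1 ≤ |∑ i, (w i : ℝ) * z i - w0| := by
    rw [hm] at hznot ⊢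
    exact one_le_abs_intCast_sub (by exact_mod_cast hznot)
  have hshift : |∑ i, (w i : ℝ) * (x i - z i)| ≤ 1 / 4 :=
    Real.abs_sum_mul_le_quarter_of_sqrt_le hclose
  have hsplit : ∑ i, (w i : ℝ) * x i - w0
      = (∑ i, (w i : ℝ) * z i - w0) + ∑ i, (w i : ℝ) * (x i - z i) := by
    simp only [mul_sub, sum_sub_distrib]; ring
  have hlin : 3 / 4 ≤ |∑ i, (w i : ℝ) * x i - w0| := by
    rw [hsplit]
    linarith [abs_sub_abs_le_abs_add (∑ i, (w i : ℝ) * z i - w0) (∑ i, (w i : ℝ) * (x i - z i))]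
  have hpenalty : 0 ≤ lam * ∑ i, (x i ^ 2 - 1) ^ 2 := by positivity
  rw [hpW, ← sq_abs]
  nlinarith

/-- if `x ∈ ℝ^n` is within ℓ₂ distance `1/(4‖w‖₂)` of a point `z ∈ {−1,1}^n`
which is not a solution of the Subset-Sum instance, then `p_W(x) ≥ 9/16 > 1/2`. -/
theorem subsetSum_deg4_close_to_nonsolution
    (n : ℕ) (hn : 1 ≤ n) (w0 : ℤ) (w : Fin n → ℤ) (hw : w ≠ 0)
    (lam : ℝ) (hlam : 0 ≤ lam)
    (pW : (Fin n → ℝ) → ℝ)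
    (hpW : ∀ x, pW x = (∑ i, (w i : ℝ) * x i - (w0 : ℝ)) ^ 2
        + lam * ∑ i, (x i ^ 2 - 1) ^ 2)
    (x : Fin n → ℝ) (z : Fin n → ℝ) (hz : ∀ i, z i = -1 ∨ z i = 1)
    (hznot : ∑ i, (w i : ℝ) * z i ≠ (w0 : ℝ))
    (hclose : Real.sqrt (∑ i, (x i - z i) ^ 2) ≤ 1 / (4 * Real.sqrt (∑ i, ((w i : ℝ)) ^ 2))) :
    9 / 16 ≤ pW x ∧ (1:ℝ) / 2 < 9 / 16 :=
  subsetSum_deg4_close_to_nonsolution_general n w0 w lam hlam pW hpW x z hz hznot hclose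
end

section
/- Let λ > 0 and β > 0 satisfy (‖w‖₂² + λ(2+β)²)·β² = 1/2. Let p_W(x) = (∑ᵢ wᵢxᵢ − w₀)² + λ∑ᵢ(xᵢ²−1)². If x ∈ ℝ^n satisfies ‖x − z‖₂ ≤ β for some z ∈ {−1,1}^n with ∑ᵢ wᵢzᵢ = w₀, then p_W(x) ≤ 1/2. -/
/-! Both terms of `p_W` are controlled by `‖x - z‖₂²`: the linear form vanishes at `z`, so
Cauchy–Schwarz bounds the first by `‖w‖₂² ‖x - z‖₂²`; and `xᵢ² - 1 = (xᵢ - zᵢ)(xᵢ + zᵢ)` with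
`|xᵢ + zᵢ| ≤ 2 + β` bounds the second by `λ (2 + β)² ‖x - z‖₂²`. The defining equation of `β`
then turns `‖x - z‖₂ ≤ β` into `p_W(x) ≤ 1/2`. -/

open Finset

theorem sq_sq_sub_one_le_of_abs_eq_one {x z b : ℝ} (hz : |z| = 1) (hxz : |x - z| ≤ b) :
    (x ^ 2 - 1) ^ 2 ≤ (2 + b) ^ 2 * (x - z) ^ 2 := by
  have hb : 0 ≤ b := (abs_nonneg _).trans hxz
  have hfactor : (x ^ 2 - 1) ^ 2 = (x + z) ^ 2 * (x - z) ^ 2 := by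
    rw [← one_pow 2, ← hz, sq_abs]
    ring
  have hsum : |x + z| ≤ |2 + b| := calc
    |x + z| = |(x - z) + 2 * z| := by ring_nf
    _ ≤ |x - z| + |2 * z| := abs_add_le _ _
    _ ≤ |2 + b| := by
      rw [abs_mul, abs_two, hz, abs_of_nonneg (by linarith : (0 : ℝ) ≤ 2 + b)]
      linarith
  rw [hfactor]
  exact mul_le_mul_of_nonneg_right (sq_le_sq.mpr hsum) (sq_nonneg _)

section

variable {ι : Type*} [Fintype ι]

theorem sq_sum_mul_sub_le_of_sum_mul_eq (w x z : ι → ℝ) {c : ℝ} (hz : ∑ i, w i * z i = c) :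
    (∑ i, w i * x i - c) ^ 2 ≤ (∑ i, w i ^ 2) * ∑ i, (x i - z i) ^ 2 := by
  have hdiff : ∑ i, w i * x i - c = ∑ i, w i * (x i - z i) := by
    simp only [mul_sub, sum_sub_distrib, hz]
  rw [hdiff]
  exact sum_mul_sq_le_sq_mul_sq univ w _

theorem abs_sub_le_sqrt_sum_sq_sub (x z : ι → ℝ) (i : ι) :
    |x i - z i| ≤ √(∑ j, (x j - z j) ^ 2) :=
  Real.abs_le_sqrt (single_le_sum (fun j _ ↦ sq_nonneg (x j - z j)) (mem_univ i))

theorem sum_sq_sq_sub_one_le {x z : ι → ℝ} {b : ℝ} (hz : ∀ i, |z i| = 1)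
    (hxz : √(∑ i, (x i - z i) ^ 2) ≤ b) :
    ∑ i, (x i ^ 2 - 1) ^ 2 ≤ (2 + b) ^ 2 * ∑ i, (x i - z i) ^ 2 := by
  rw [mul_sum]
  exact sum_le_sum fun i _ ↦
    sq_sq_sub_one_le_of_abs_eq_one (hz i) ((abs_sub_le_sqrt_sum_sq_sub x z i).trans hxz)

end

theorem subsetSum_deg4_close_to_solution_general
    (n : ℕ) (w0 : ℤ) (w : Fin n → ℝ)
    (lam β : ℝ) (hlam : 0 < lam)
    (hβ : ((∑ i, (w i) ^ 2) + lam * (2 + β) ^ 2) * β ^ 2 = 1 / 2)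
    (pW : (Fin n → ℝ) → ℝ)
    (hpW : ∀ x, pW x = (∑ i, w i * x i - (w0 : ℝ)) ^ 2
        + lam * ∑ i, (x i ^ 2 - 1) ^ 2)
    (x : Fin n → ℝ) (z : Fin n → ℝ) (hz : ∀ i, z i = -1 ∨ z i = 1)
    (hzsol : ∑ i, w i * z i = (w0 : ℝ))
    (hclose : Real.sqrt (∑ i, (x i - z i) ^ 2) ≤ β) :
    pW x ≤ 1 / 2 := by
  set D := ∑ i, (x i - z i) ^ 2
  have hD : D ≤ β ^ 2 := (Real.sqrt_le_iff.1 hclose).2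
  have hunit : ∀ i, |z i| = 1 := fun i ↦ by rcases hz i with h | h <;> simp [h]
  have hcoeff : 0 ≤ (∑ i, w i ^ 2) + lam * (2 + β) ^ 2 :=
    add_nonneg (sum_nonneg fun i _ ↦ sq_nonneg (w i)) (mul_nonneg hlam.le (sq_nonneg _))
  rw [hpW]
  calc _ ≤ (∑ i, w i ^ 2) * D + lam * ((2 + β) ^ 2 * D) :=
        add_le_add (sq_sum_mul_sub_le_of_sum_mul_eq w x z hzsol)
          (mul_le_mul_of_nonneg_left (sum_sq_sq_sub_one_le hunit hclose) hlam.le)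
    _ = ((∑ i, w i ^ 2) + lam * (2 + β) ^ 2) * D := by ring
    _ ≤ ((∑ i, w i ^ 2) + lam * (2 + β) ^ 2) * β ^ 2 := mul_le_mul_of_nonneg_left hD hcoeff
    _ = 1 / 2 := hβ

/-- with `β > 0` satisfying `(‖w‖₂² + λ(2+β)²)β² = 1/2`, if `x` is within ℓ₂
distance `β` of a point `z ∈ {−1,1}^n` with `⟨w,z⟩ = w₀`, then `p_W(x) ≤ 1/2`. -/
theorem subsetSum_deg4_close_to_solution
    (n : ℕ) (hn : 1 ≤ n) (w0 : ℤ) (w : Fin n → ℝ)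
    (lam β : ℝ) (hlam : 0 < lam) (hβpos : 0 < β)
    (hβ : ((∑ i, (w i) ^ 2) + lam * (2 + β) ^ 2) * β ^ 2 = 1 / 2)
    (pW : (Fin n → ℝ) → ℝ)
    (hpW : ∀ x, pW x = (∑ i, w i * x i - (w0 : ℝ)) ^ 2
        + lam * ∑ i, (x i ^ 2 - 1) ^ 2)
    (x : Fin n → ℝ) (z : Fin n → ℝ) (hz : ∀ i, z i = -1 ∨ z i = 1)
    (hzsol : ∑ i, w i * z i = (w0 : ℝ))
    (hclose : Real.sqrt (∑ i, (x i - z i) ^ 2) ≤ β) :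
    pW x ≤ 1 / 2 :=
  subsetSum_deg4_close_to_solution_general n w0 w lam β hlam hβ pW hpW x z hz hzsol hclose
end

section
/- Let B(x) = ∑_{i=1}^n (xᵢ²−1)² and, for x ∈ ℝ^n, let x* ∈ {−1,1}^n be the coordinatewise sign of x. Suppose λ ≥ 1 and let α ∈ (0, 1/2) be the smallest positive solution of 4(1−X)²X² = 1/(2λ). If ‖x − z‖₂ > α for every z ∈ {−1,1}^n, then B(x) > 1/(2λ). -/
open Finset

/-! Let `x*` be the coordinatewise sign of `x`, with `sign 0 = 1`. For `s = ±1` one has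
`(t² - 1)² = (t - s)² (t + s)²`. If some `|xᵢ - x*ᵢ| > 2α`, that single coordinate already gives
`B(x) > 4α² ≥ 4(1-α)²α²`, because `|xᵢ + x*ᵢ| ≥ 1`. Otherwise `|xᵢ + x*ᵢ| ≥ 2 - |xᵢ - x*ᵢ| ≥ 2 - 2α`
in every coordinate, so `B(x) ≥ 4(1-α)² ‖x - x*‖² > 4(1-α)²α²`. -/

noncomputable def boolSign (t : ℝ) : ℝ := if 0 ≤ t then 1 else -1

lemma abs_boolSign (t : ℝ) : |boolSign t| = 1 := by
  unfold boolSign; split_ifs <;> simp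

lemma sq_sub_one_sq_eq_mul {t s : ℝ} (hs : |s| = 1) :
    (t ^ 2 - 1) ^ 2 = (t - s) ^ 2 * (t + s) ^ 2 := by
  have hs2 : s ^ 2 = 1 := by rw [← sq_abs, hs, one_pow]
  linear_combination (2 * t ^ 2 - 1 - s ^ 2) * hs2

lemma one_le_sq_add_boolSign (t : ℝ) : 1 ≤ (t + boolSign t) ^ 2 := by
  unfold boolSign; split_ifs with h <;> nlinarith

lemma sq_sub_boolSign_le (t : ℝ) : (t - boolSign t) ^ 2 ≤ (t ^ 2 - 1) ^ 2 := by
  rw [sq_sub_one_sq_eq_mul (abs_boolSign t)]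
  exact le_mul_of_one_le_right (sq_nonneg _) (one_le_sq_add_boolSign t)

lemma mul_sq_sub_le_of_abs_sub_le {t s α : ℝ} (hs : |s| = 1) (hα : α ≤ 1)
    (hts : |t - s| ≤ 2 * α) : (2 * (1 - α)) ^ 2 * (t - s) ^ 2 ≤ (t ^ 2 - 1) ^ 2 := by
  -- triangle inequality for `2s = (t + s) - (t - s)`
  have hsum : 2 * (1 - α) ≤ |t + s| := by
    have := abs_sub (t + s) (t - s)
    rw [show t + s - (t - s) = 2 * s by ring, abs_mul, hs] at this
    norm_num at this
    linarith
  rw [sq_sub_one_sq_eq_mul hs, mul_comm, ← sq_abs (t + s)]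
  gcongr

lemma mul_sq_lt_sum_sq_sub_one_sq {ι : Type*} [Fintype ι] {α : ℝ} (hα₀ : 0 ≤ α) (hα₁ : α < 1)
    (x : ι → ℝ) (hfar : α ^ 2 < ∑ i, (x i - boolSign (x i)) ^ 2) :
    (2 * (1 - α)) ^ 2 * α ^ 2 < ∑ i, (x i ^ 2 - 1) ^ 2 := by
  by_cases hnear : ∀ i, |x i - boolSign (x i)| ≤ 2 * α
  · calc (2 * (1 - α)) ^ 2 * α ^ 2
          < (2 * (1 - α)) ^ 2 * ∑ i, (x i - boolSign (x i)) ^ 2 := by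
            gcongr
        _ = ∑ i, (2 * (1 - α)) ^ 2 * (x i - boolSign (x i)) ^ 2 := mul_sum _ _ _
        _ ≤ ∑ i, (x i ^ 2 - 1) ^ 2 := sum_le_sum fun i _ =>
            mul_sq_sub_le_of_abs_sub_le (abs_boolSign _) hα₁.le (hnear i)
  · push Not at hnear
    obtain ⟨i, hi⟩ := hnear
    calc (2 * (1 - α)) ^ 2 * α ^ 2 ≤ (2 * α) ^ 2 := by
          nlinarith [mul_le_mul_of_nonneg_right (show (1 - α) ^ 2 ≤ 1 by nlinarith) (sq_nonneg α)]
      _ < (x i - boolSign (x i)) ^ 2 := by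
          rw [← sq_abs (x i - _)]; gcongr
      _ ≤ (x i ^ 2 - 1) ^ 2 := sq_sub_boolSign_le _
      _ ≤ ∑ j, (x j ^ 2 - 1) ^ 2 :=
          single_le_sum (f := fun j => (x j ^ 2 - 1) ^ 2) (fun j _ => sq_nonneg _) (mem_univ i)

theorem deg4_penalty_far_from_boolean_general
    (n : ℕ) (lam α : ℝ)
    (hαmem : α ∈ Set.Ioo (0:ℝ) (1/2))
    (hαleast : IsLeast {t : ℝ | 0 < t ∧ 4 * (1 - t) ^ 2 * t ^ 2 = 1 / (2 * lam)} α)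
    (x : Fin n → ℝ)
    (hfar : ∀ z : Fin n → ℝ, (∀ i, z i = -1 ∨ z i = 1) →
      α < Real.sqrt (∑ i, (x i - z i) ^ 2)) :
    1 / (2 * lam) < ∑ i, (x i ^ 2 - 1) ^ 2 := by
  obtain ⟨hα₀, hα₁⟩ := hαmem
  have hsign : ∀ i, boolSign (x i) = -1 ∨ boolSign (x i) = 1 := fun i =>
    ((abs_eq zero_le_one).mp (abs_boolSign (x i))).symm
  have hdist := (Real.lt_sqrt hα₀.le).mp (hfar _ hsign)
  rw [← hαleast.1.2, show 4 * (1 - α) ^ 2 = (2 * (1 - α)) ^ 2 by ring]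
  exact mul_sq_lt_sum_sq_sub_one_sq hα₀.le (by linarith) x hdist

/-- with `λ ≥ 1` and `α ∈ (0,1/2)` the smallest positive solution of
`4(1−X)²X² = 1/(2λ)`, if `x ∈ ℝ^n` is at ℓ₂ distance `> α` from every point of `{−1,1}^n`,
then `B(x) = ∑ᵢ(xᵢ²−1)² > 1/(2λ)`. -/
theorem deg4_penalty_far_from_boolean
    (n : ℕ) (lam α : ℝ) (hlam : 1 ≤ lam)
    (hαmem : α ∈ Set.Ioo (0:ℝ) (1/2))
    (hαleast : IsLeast {t : ℝ | 0 < t ∧ 4 * (1 - t) ^ 2 * t ^ 2 = 1 / (2 * lam)} α)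
    (x : Fin n → ℝ)
    (hfar : ∀ z : Fin n → ℝ, (∀ i, z i = -1 ∨ z i = 1) →
      α < Real.sqrt (∑ i, (x i - z i) ^ 2)) :
    1 / (2 * lam) < ∑ i, (x i ^ 2 - 1) ^ 2 :=
  deg4_penalty_far_from_boolean_general n lam α hαmem hαleast x hfar
end
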